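/- arXiv:2408.11222 — 2 statements merged into one kernel-verified Lean document; each statement's English description precedes it below -/
import Mathlib

section
/- Let f, g : ℝ → ℂ be functions of locally bounded variation. Then the product rule d(fg) = f^A dg + g^A df holds, as an identity of measures on any bounded Borel subset of ℝ. -/
open MeasureTheory Set Function

noncomputable section

/-- The Lebesgue–Stieltjes measure `dm` of a monotone function `m : ℝ → ℝ`, determined by
`dm((x₁, x₂]) = m^R(x₂) - m^R(x₁)` where `m^R` denotes right-hand limits. -/
def monoStieltjes {m : ℝ → ℝ} (hm : Monotone m) : Measure ℝ :=
  hm.stieltjesFunction.measure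

/-- The average value `f^A = (f^L + f^R)/2` of a complex function of locally bounded
variation given by the monotone decomposition `f = f₁ - f₂ + i(f₃ - f₄)`. -/
def avgVal (f₁ f₂ f₃ f₄ : ℝ → ℝ) (x : ℝ) : ℂ :=
  (((leftLim f₁ x - leftLim f₂ x) + (rightLim f₁ x - rightLim f₂ x)) / 2 : ℝ)
    + Complex.I * (((leftLim f₃ x - leftLim f₄ x) + (rightLim f₃ x - rightLim f₄ x)) / 2 : ℝ)

/-! Write `du` for the Stieltjes measure of a monotone `u`. Splitting the square `(a,b]²` along
the diagonal and applying Fubini to `du ⊗ dv`, with `du((a,y)) = u^L(y) - u^R(a)` and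
`dv((a,x]) = v^R(x) - v^R(a)`, gives the integration by parts formula
`∫_{(a,b]} u^L dv + ∫_{(a,b]} v^R du = u^R(b) v^R(b) - u^R(a) v^R(a)`.
Averaging it with the same formula for `u` and `v` swapped yields the symmetric version with
`u^A` and `v^A`, and the complex statement follows by bilinearity, since the right limits of `fg`
are the products of those of `f` and `g`. -/

open Filter Topology

section Square

variable {α : Type*} [LinearOrder α] [TopologicalSpace α] [OrderClosedTopology α]
  [SecondCountableTopology α] [MeasurableSpace α] [BorelSpace α]

theorem measure_univ_mul_measure_univ_eq_lintegral_add_lintegral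
    (μ ν : Measure α) [SFinite μ] [SFinite ν] :
    μ univ * ν univ = ∫⁻ y, μ (Iio y) ∂ν + ∫⁻ x, ν (Iic x) ∂μ := by
  have hlt : MeasurableSet {p : α × α | p.1 < p.2} := measurableSet_lt'
  rw [← Measure.prod_prod, univ_prod_univ, ← measure_add_measure_compl hlt,
    Measure.prod_apply_symm hlt, Measure.prod_apply hlt.compl]
  congr with x
  exact congrArg ν compl_Ioi

theorem measureReal_univ_mul_measureReal_univ_eq_integral_add_integral
    (μ ν : Measure α) [IsFiniteMeasure μ] [IsFiniteMeasure ν] :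
    μ.real univ * ν.real univ = ∫ y, μ.real (Iio y) ∂ν + ∫ x, ν.real (Iic x) ∂μ := by
  have h := measure_univ_mul_measure_univ_eq_lintegral_add_lintegral μ ν
  have hfin : ∫⁻ y, μ (Iio y) ∂ν + ∫⁻ x, ν (Iic x) ∂μ ≠ ⊤ :=
    h ▸ ENNReal.mul_ne_top (measure_ne_top μ univ) (measure_ne_top ν univ)
  rw [ENNReal.add_ne_top] at hfin
  have hIio : Measurable fun y => μ (Iio y) :=
    Monotone.measurable fun _ _ h => measure_mono (Iio_subset_Iio h)
  have hIic : Measurable fun x => ν (Iic x) :=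
    Monotone.measurable fun _ _ h => measure_mono (Iic_subset_Iic.2 h)
  simp only [measureReal_def]
  rw [integral_toReal hIio.aemeasurable (ae_of_all _ fun _ => measure_lt_top _ _),
    integral_toReal hIic.aemeasurable (ae_of_all _ fun _ => measure_lt_top _ _),
    ← ENNReal.toReal_add hfin.1 hfin.2, ← ENNReal.toReal_mul, h]

end Square

variable {u v : ℝ → ℝ} {a b x y : ℝ}

instance isLocallyFiniteMeasure_monoStieltjes (hu : Monotone u) :
    IsLocallyFiniteMeasure (monoStieltjes hu) :=
  StieltjesFunction.instIsLocallyFiniteMeasure _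

theorem measureReal_monoStieltjes_Ioc (hu : Monotone u) (hxy : x ≤ y) :
    (monoStieltjes hu).real (Ioc x y) = rightLim u y - rightLim u x := by
  rw [measureReal_def, monoStieltjes, StieltjesFunction.measure_Ioc, hu.stieltjesFunction_eq,
    hu.stieltjesFunction_eq, ENNReal.toReal_ofReal (sub_nonneg.2 (hu.rightLim hxy))]

theorem measureReal_monoStieltjes_Ioo (hu : Monotone u) (hxy : x < y) :
    (monoStieltjes hu).real (Ioo x y) = leftLim u y - rightLim u x := by
  rw [measureReal_def, monoStieltjes, StieltjesFunction.measure_Ioo, hu.stieltjesFunction_eq,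
    show ⇑hu.stieltjesFunction = rightLim u from rfl, leftLim_rightLim (hu.tendsto_leftLim y),
    ENNReal.toReal_ofReal (sub_nonneg.2 (hu.rightLim_le_leftLim hxy))]

theorem Monotone.integrableOn_Ioc {μ : Measure ℝ} [IsLocallyFiniteMeasure μ] (hv : Monotone v)
    (a b : ℝ) : IntegrableOn v (Ioc a b) μ :=
  (hv.locallyIntegrable.integrableOn_isCompact isCompact_Icc).mono_set Ioc_subset_Icc_self

theorem integral_leftLim_add_integral_rightLim (hu : Monotone u) (hv : Monotone v) (hab : a ≤ b) :
    ∫ y in Ioc a b, leftLim u y ∂monoStieltjes hv + ∫ x in Ioc a b, rightLim v x ∂monoStieltjes hu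
      = rightLim u b * rightLim v b - rightLim u a * rightLim v a := by
  set μ := monoStieltjes hu
  set ν := monoStieltjes hv
  have : IsFiniteMeasure (μ.restrict (Ioc a b)) := isFiniteMeasure_restrict.2 measure_Ioc_lt_top.ne
  have : IsFiniteMeasure (ν.restrict (Ioc a b)) := isFiniteMeasure_restrict.2 measure_Ioc_lt_top.ne
  have hsq := measureReal_univ_mul_measureReal_univ_eq_integral_add_integral
    (μ.restrict (Ioc a b)) (ν.restrict (Ioc a b))
  have hIio : EqOn (fun y => (μ.restrict (Ioc a b)).real (Iio y))
      (fun y => leftLim u y - rightLim u a) (Ioc a b) := fun y hy => by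
    have : Iio y ∩ Ioc a b = Ioo a y := by
      ext z
      simp only [mem_inter_iff, mem_Iio, mem_Ioc, mem_Ioo]
      grind
    simp only [measureReal_restrict_apply measurableSet_Iio, this]
    exact measureReal_monoStieltjes_Ioo hu hy.1
  have hIic : EqOn (fun x => (ν.restrict (Ioc a b)).real (Iic x))
      (fun x => rightLim v x - rightLim v a) (Ioc a b) := fun x hx => by
    simp only [measureReal_restrict_apply measurableSet_Iic, Iic_inter_Ioc_of_le hx.2]
    exact measureReal_monoStieltjes_Ioc hv hx.1.le
  rw [measureReal_restrict_apply_univ, measureReal_restrict_apply_univ,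
    setIntegral_congr_fun measurableSet_Ioc hIio, setIntegral_congr_fun measurableSet_Ioc hIic,
    integral_sub (hu.leftLim.integrableOn_Ioc a b) (integrableOn_const measure_Ioc_lt_top.ne),
    integral_sub (hv.rightLim.integrableOn_Ioc a b) (integrableOn_const measure_Ioc_lt_top.ne),
    setIntegral_const, setIntegral_const, measureReal_monoStieltjes_Ioc hu hab,
    measureReal_monoStieltjes_Ioc hv hab, smul_eq_mul, smul_eq_mul] at hsq
  linear_combination -hsq

def avgLim (u : ℝ → ℝ) (x : ℝ) : ℝ := (leftLim u x + rightLim u x) / 2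

theorem Monotone.avgLim (hu : Monotone u) : Monotone (avgLim u) :=
  (hu.leftLim.add hu.rightLim).div_const zero_le_two

theorem integral_avgLim_add_integral_avgLim (hu : Monotone u) (hv : Monotone v) (hab : a ≤ b) :
    ∫ x in Ioc a b, avgLim u x ∂monoStieltjes hv + ∫ x in Ioc a b, avgLim v x ∂monoStieltjes hu
      = rightLim u b * rightLim v b - rightLim u a * rightLim v a := by
  have h₁ := integral_leftLim_add_integral_rightLim hu hv hab
  have h₂ := integral_leftLim_add_integral_rightLim hv hu hab
  simp only [avgLim, integral_div]
  rw [integral_add (hu.leftLim.integrableOn_Ioc a b) (hu.rightLim.integrableOn_Ioc a b),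
    integral_add (hv.leftLim.integrableOn_Ioc a b) (hv.rightLim.integrableOn_Ioc a b)]
  linear_combination (h₁ + h₂) / 2

theorem integral_avgLim_sub_add_integral_avgLim_sub
    {u₁ u₂ v₁ v₂ : ℝ → ℝ} (hu₁ : Monotone u₁) (hu₂ : Monotone u₂)
    (hv₁ : Monotone v₁) (hv₂ : Monotone v₂) (hab : a ≤ b) :
    (∫ x in Ioc a b, (avgLim u₁ x - avgLim u₂ x) ∂monoStieltjes hv₁)
        - (∫ x in Ioc a b, (avgLim u₁ x - avgLim u₂ x) ∂monoStieltjes hv₂)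
      + ((∫ x in Ioc a b, (avgLim v₁ x - avgLim v₂ x) ∂monoStieltjes hu₁)
        - ∫ x in Ioc a b, (avgLim v₁ x - avgLim v₂ x) ∂monoStieltjes hu₂)
      = (rightLim u₁ b - rightLim u₂ b) * (rightLim v₁ b - rightLim v₂ b)
        - (rightLim u₁ a - rightLim u₂ a) * (rightLim v₁ a - rightLim v₂ a) := by
  simp only [integral_sub (hu₁.avgLim.integrableOn_Ioc a b) (hu₂.avgLim.integrableOn_Ioc a b),
    integral_sub (hv₁.avgLim.integrableOn_Ioc a b) (hv₂.avgLim.integrableOn_Ioc a b)]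
  linear_combination integral_avgLim_add_integral_avgLim hu₁ hv₁ hab
    - integral_avgLim_add_integral_avgLim hu₂ hv₁ hab
    - integral_avgLim_add_integral_avgLim hu₁ hv₂ hab
    + integral_avgLim_add_integral_avgLim hu₂ hv₂ hab

theorem integral_avgVal {f₁ f₂ f₃ f₄ m : ℝ → ℝ} (hf₁ : Monotone f₁) (hf₂ : Monotone f₂)
    (hf₃ : Monotone f₃) (hf₄ : Monotone f₄) (hm : Monotone m) :
    ∫ x in Ioc a b, avgVal f₁ f₂ f₃ f₄ x ∂monoStieltjes hm
      = ((∫ x in Ioc a b, (avgLim f₁ x - avgLim f₂ x) ∂monoStieltjes hm : ℝ) : ℂ)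
        + Complex.I
          * ((∫ x in Ioc a b, (avgLim f₃ x - avgLim f₄ x) ∂monoStieltjes hm : ℝ) : ℂ) := by
  have hre : IntegrableOn (fun x => avgLim f₁ x - avgLim f₂ x) (Ioc a b) (monoStieltjes hm) :=
    (hf₁.avgLim.integrableOn_Ioc a b).sub (hf₂.avgLim.integrableOn_Ioc a b)
  have him : IntegrableOn (fun x => avgLim f₃ x - avgLim f₄ x) (Ioc a b) (monoStieltjes hm) :=
    (hf₃.avgLim.integrableOn_Ioc a b).sub (hf₄.avgLim.integrableOn_Ioc a b)
  have havg : ∀ x, avgVal f₁ f₂ f₃ f₄ x = ((avgLim f₁ x - avgLim f₂ x : ℝ) : ℂ)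
      + Complex.I * ((avgLim f₃ x - avgLim f₄ x : ℝ) : ℂ) := fun x => by
    simp only [avgVal, avgLim]
    push_cast
    ring
  simp only [havg]
  rw [integral_add hre.ofReal (him.ofReal.const_mul _), integral_const_mul,
    integral_complex_ofReal, integral_complex_ofReal]

theorem tendsto_nhdsGT_of_eq_decomposition {f : ℝ → ℂ} {f₁ f₂ f₃ f₄ : ℝ → ℝ}
    (hf₁ : Monotone f₁) (hf₂ : Monotone f₂) (hf₃ : Monotone f₃) (hf₄ : Monotone f₄)
    (hf : ∀ x, f x = ((f₁ x - f₂ x : ℝ) : ℂ) + Complex.I * ((f₃ x - f₄ x : ℝ) : ℂ)) (x : ℝ) :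
    Tendsto f (𝓝[>] x) (𝓝 (((rightLim f₁ x - rightLim f₂ x : ℝ) : ℂ)
      + Complex.I * ((rightLim f₃ x - rightLim f₄ x : ℝ) : ℂ))) := by
  rw [funext hf]
  exact ((hf₁.tendsto_rightLim x).sub (hf₂.tendsto_rightLim x)).ofReal.add
    (((hf₃.tendsto_rightLim x).sub (hf₄.tendsto_rightLim x)).ofReal.const_mul _)

/-- product rule for locally BV functions. Let `f, g : ℝ → ℂ` have locally
bounded variation, with monotone decompositions `f = f₁ - f₂ + i(f₃ - f₄)`,
`g = g₁ - g₂ + i(g₃ - g₄)`, and let `fg = p₁ - p₂ + i(p₃ - p₄)` be a monotone decomposition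
of the product. Then `d(fg) = f^A dg + g^A df` as measures on bounded Borel subsets of `ℝ`:
for all `a ≤ b`, `d(fg)((a,b]) = ∫_{(a,b]} f^A dg + ∫_{(a,b]} g^A df`. -/
theorem bv_product_rule
    (f₁ f₂ f₃ f₄ g₁ g₂ g₃ g₄ p₁ p₂ p₃ p₄ : ℝ → ℝ)
    (hf₁ : Monotone f₁) (hf₂ : Monotone f₂) (hf₃ : Monotone f₃) (hf₄ : Monotone f₄)
    (hg₁ : Monotone g₁) (hg₂ : Monotone g₂) (hg₃ : Monotone g₃) (hg₄ : Monotone g₄)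
    (hp₁ : Monotone p₁) (hp₂ : Monotone p₂) (hp₃ : Monotone p₃) (hp₄ : Monotone p₄)
    (f g : ℝ → ℂ)
    (hf : ∀ x, f x = ((f₁ x - f₂ x : ℝ) : ℂ) + Complex.I * ((f₃ x - f₄ x : ℝ) : ℂ))
    (hg : ∀ x, g x = ((g₁ x - g₂ x : ℝ) : ℂ) + Complex.I * ((g₃ x - g₄ x : ℝ) : ℂ))
    (hp : ∀ x, f x * g x = ((p₁ x - p₂ x : ℝ) : ℂ) + Complex.I * ((p₃ x - p₄ x : ℝ) : ℂ)) :
    ∀ a b : ℝ, a ≤ b →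
      ((((monoStieltjes hp₁) (Ioc a b)).toReal - ((monoStieltjes hp₂) (Ioc a b)).toReal : ℝ) : ℂ)
          + Complex.I *
            ((((monoStieltjes hp₃) (Ioc a b)).toReal
              - ((monoStieltjes hp₄) (Ioc a b)).toReal : ℝ) : ℂ)
        = ((∫ x in Ioc a b, avgVal f₁ f₂ f₃ f₄ x ∂(monoStieltjes hg₁))
            - ∫ x in Ioc a b, avgVal f₁ f₂ f₃ f₄ x ∂(monoStieltjes hg₂))
          + Complex.I *
            ((∫ x in Ioc a b, avgVal f₁ f₂ f₃ f₄ x ∂(monoStieltjes hg₃))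
              - ∫ x in Ioc a b, avgVal f₁ f₂ f₃ f₄ x ∂(monoStieltjes hg₄))
          + (((∫ x in Ioc a b, avgVal g₁ g₂ g₃ g₄ x ∂(monoStieltjes hf₁))
              - ∫ x in Ioc a b, avgVal g₁ g₂ g₃ g₄ x ∂(monoStieltjes hf₂))
            + Complex.I *
              ((∫ x in Ioc a b, avgVal g₁ g₂ g₃ g₄ x ∂(monoStieltjes hf₃))
                - ∫ x in Ioc a b, avgVal g₁ g₂ g₃ g₄ x ∂(monoStieltjes hf₄))) := by
  intro a b hab
  have hprod : ∀ x, ((rightLim p₁ x - rightLim p₂ x : ℝ) : ℂ)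
      + Complex.I * ((rightLim p₃ x - rightLim p₄ x : ℝ) : ℂ)
      = (((rightLim f₁ x - rightLim f₂ x : ℝ) : ℂ)
          + Complex.I * ((rightLim f₃ x - rightLim f₄ x : ℝ) : ℂ))
        * (((rightLim g₁ x - rightLim g₂ x : ℝ) : ℂ)
          + Complex.I * ((rightLim g₃ x - rightLim g₄ x : ℝ) : ℂ)) := fun x =>
    tendsto_nhds_unique (tendsto_nhdsGT_of_eq_decomposition hp₁ hp₂ hp₃ hp₄ hp x)
      ((tendsto_nhdsGT_of_eq_decomposition hf₁ hf₂ hf₃ hf₄ hf x).mul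
        (tendsto_nhdsGT_of_eq_decomposition hg₁ hg₂ hg₃ hg₄ hg x))
  have hrr := congrArg ((↑) : ℝ → ℂ)
    (integral_avgLim_sub_add_integral_avgLim_sub hf₁ hf₂ hg₁ hg₂ hab)
  have hii := congrArg ((↑) : ℝ → ℂ)
    (integral_avgLim_sub_add_integral_avgLim_sub hf₃ hf₄ hg₃ hg₄ hab)
  have hri := congrArg ((↑) : ℝ → ℂ)
    (integral_avgLim_sub_add_integral_avgLim_sub hf₁ hf₂ hg₃ hg₄ hab)
  have hir := congrArg ((↑) : ℝ → ℂ)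
    (integral_avgLim_sub_add_integral_avgLim_sub hf₃ hf₄ hg₁ hg₂ hab)
  simp only [← measureReal_def, measureReal_monoStieltjes_Ioc _ hab,
    integral_avgVal hf₁ hf₂ hf₃ hf₄, integral_avgVal hg₁ hg₂ hg₃ hg₄]
  push_cast at hprod hrr hii hri hir ⊢
  linear_combination hprod b - hprod a - hrr - Complex.I ^ 2 * hii - Complex.I * (hri + hir)

end
end

section
/- Let f : ℝ → ℝ be continuous and of locally bounded variation. Then the chain rule d(e^f) = e^f df holds, as an identity of measures on any bounded Borel subset of ℝ. -/
open MeasureTheory Set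

noncomputable section

/-! The chain rule `d(φ ∘ f) = φ' ∘ f df` holds for every C¹ function `φ`, with `φ = exp` the case
at hand. Write `df = ds₁ - ds₂` with right-continuous monotone `s₁, s₂` (the right limits of the
given `m₁, m₂`; they still subtract to `f` because `f` is continuous). On a short interval
`(u, v]`, the mean value theorem for `φ` and the intermediate value theorem for `f` give
`φ (f v) - φ (f u) = φ' (f w) (f v - f u)` for some `w ∈ [u, v]`, and `f v - f u = df((u, v])`.
By uniform continuity of `φ' ∘ f` on `[a, b]`, the defect
`H x = ∫_{(a, x]} φ' ∘ f df - φ (f x)` therefore changes by at most `ε · d(s₁ + s₂)((u, v])` on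
intervals shorter than some `δ`; chaining such intervals from `a` to `b` and letting `ε → 0`
gives `H b = H a`. -/

open Filter Topology

lemma Monotone.stieltjesFunction_sub_stieltjesFunction {f m₁ m₂ : ℝ → ℝ} {x : ℝ}
    (hm₁ : Monotone m₁) (hm₂ : Monotone m₂) (hdecomp : ∀ x, f x = m₁ x - m₂ x)
    (hf : ContinuousWithinAt f (Ioi x) x) :
    hm₁.stieltjesFunction x - hm₂.stieltjesFunction x = f x := by
  rw [Monotone.stieltjesFunction_eq, Monotone.stieltjesFunction_eq]
  refine tendsto_nhds_unique ((hm₁.tendsto_rightLim x).sub (hm₂.tendsto_rightLim x)) ?_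
  exact hf.tendsto.congr hdecomp

lemma StieltjesFunction.measureReal_Ioc (s : StieltjesFunction ℝ) {u v : ℝ} (huv : u ≤ v) :
    s.measure.real (Ioc u v) = s v - s u := by
  rw [measureReal_def, s.measure_Ioc, ENNReal.toReal_ofReal (sub_nonneg.2 (s.mono huv))]

lemma exists_mem_uIcc_sub_eq_mul_sub {φ φ' : ℝ → ℝ} (hφ : ∀ x, HasDerivAt φ (φ' x) x)
    (x y : ℝ) : ∃ c ∈ uIcc x y, φ y - φ x = φ' c * (y - x) := by
  wlog hxy : x < y generalizing x y
  · rcases (not_lt.1 hxy).eq_or_lt with rfl | hyx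
    · exact ⟨y, left_mem_uIcc, by ring⟩
    · obtain ⟨c, hc, hc'⟩ := this y x hyx
      exact ⟨c, uIcc_comm x y ▸ hc, by linear_combination -hc'⟩
  obtain ⟨c, hc, hc'⟩ := exists_hasDerivAt_eq_slope φ φ' hxy
    (fun t _ => (hφ t).continuousAt.continuousWithinAt) (fun t _ => hφ t)
  exact ⟨c, Icc_subset_uIcc (Ioo_subset_Icc_self hc),
    by rw [hc', div_mul_cancel₀ _ (sub_ne_zero.2 hxy.ne')]⟩

lemma exists_mem_Icc_comp_sub_eq_mul_sub {φ φ' f : ℝ → ℝ} {u v : ℝ}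
    (hφ : ∀ x, HasDerivAt φ (φ' x) x) (hf : ContinuousOn f (Icc u v)) (huv : u ≤ v) :
    ∃ w ∈ Icc u v, φ (f v) - φ (f u) = φ' (f w) * (f v - f u) := by
  obtain ⟨c, hc, hφc⟩ := exists_mem_uIcc_sub_eq_mul_sub hφ (f u) (f v)
  obtain ⟨w, hw, rfl⟩ := intermediate_value_uIcc (uIcc_of_le huv ▸ hf) hc
  exact ⟨w, uIcc_of_le huv ▸ hw, hφc⟩

lemma abs_setIntegral_sub_mul_measureReal_le {α : Type*} [MeasurableSpace α] {μ : Measure α}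
    {s : Set α} {g : α → ℝ} {K ε : ℝ} (hs : μ s < ⊤) (hg : IntegrableOn g s μ)
    (hgK : ∀ t ∈ s, |g t - K| ≤ ε) :
    |∫ t in s, g t ∂μ - K * μ.real s| ≤ ε * μ.real s := by
  have hsub : ∫ t in s, g t ∂μ - K * μ.real s = ∫ t in s, (g t - K) ∂μ := by
    rw [integral_sub hg (integrableOn_const hs.ne), setIntegral_const, smul_eq_mul, mul_comm]
  rw [hsub]
  exact norm_setIntegral_le_of_norm_le_const (f := fun t => g t - K) hs hgK

lemma abs_sub_le_mul_sub_of_forall_sub_lt {H F : ℝ → ℝ} {a b ε δ : ℝ} (hδ : 0 < δ)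
    (hloc : ∀ u ∈ Icc a b, ∀ v ∈ Icc a b, u ≤ v → v - u < δ → |H v - H u| ≤ ε * (F v - F u))
    {u v : ℝ} (hu : u ∈ Icc a b) (hv : v ∈ Icc a b) (huv : u ≤ v) :
    |H v - H u| ≤ ε * (F v - F u) := by
  obtain ⟨n, hn⟩ := exists_nat_ge ((v - u) / (δ / 2))
  rw [div_le_iff₀ (half_pos hδ)] at hn
  induction n generalizing u with
  | zero => simp [le_antisymm huv (by simpa using hn)]
  | succ n ih =>
    by_cases hshort : v - u < δ
    · exact hloc u hu v hv huv hshort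
    have hw : u + δ / 2 ∈ Icc a b := ⟨by linarith [hu.1], by linarith [hv.2]⟩
    calc |H v - H u| ≤ |H v - H (u + δ / 2)| + |H (u + δ / 2) - H u| := abs_sub_le _ _ _
      _ ≤ ε * (F v - F (u + δ / 2)) + ε * (F (u + δ / 2) - F u) :=
        add_le_add (ih hw (by linarith) (by push_cast at hn; linarith))
          (hloc u hu _ hw (by linarith) (by linarith))
      _ = ε * (F v - F u) := by ring

lemma eq_of_forall_abs_sub_le_mul_sub {H F : ℝ → ℝ} {a b : ℝ} (hab : a ≤ b)
    (hloc : ∀ ε > 0, ∃ δ > 0, ∀ u ∈ Icc a b, ∀ v ∈ Icc a b, u ≤ v → v - u < δ →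
      |H v - H u| ≤ ε * (F v - F u)) :
    H b = H a := by
  have hbound : ∀ ε > 0, |H b - H a| ≤ ε * (F b - F a) := fun ε hε => by
    obtain ⟨δ, hδ, h⟩ := hloc ε hε
    exact abs_sub_le_mul_sub_of_forall_sub_lt hδ h (left_mem_Icc.2 hab) (right_mem_Icc.2 hab)
      hab
  have hlim : Tendsto (fun ε => ε * (F b - F a)) (𝓝[>] 0) (𝓝 0) := by
    simpa using (tendsto_id.mul_const (F b - F a)).mono_left (nhdsWithin_le_nhds (a := (0 : ℝ)))
  have := ge_of_tendsto hlim (eventually_nhdsWithin_of_forall hbound)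
  exact sub_eq_zero.1 (abs_nonpos_iff.1 this)

theorem StieltjesFunction.setIntegral_deriv_comp_sub_setIntegral {s₁ s₂ : StieltjesFunction ℝ}
    {f φ φ' : ℝ → ℝ} (hf : ∀ x, f x = s₁ x - s₂ x) (hfc : Continuous f)
    (hφ : ∀ x, HasDerivAt φ (φ' x) x) (hφ' : Continuous φ') {a b : ℝ} (hab : a ≤ b) :
    ∫ t in Ioc a b, φ' (f t) ∂s₁.measure - ∫ t in Ioc a b, φ' (f t) ∂s₂.measure
      = φ (f b) - φ (f a) := by
  set g : ℝ → ℝ := fun t => φ' (f t)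
  have hg : Continuous g := hφ'.comp hfc
  let H : ℝ → ℝ := fun x =>
    ∫ t in a..x, g t ∂s₁.measure - ∫ t in a..x, g t ∂s₂.measure - φ (f x)
  have hH : ∀ u v, u ≤ v → H v - H u = (∫ t in Ioc u v, g t ∂s₁.measure
      - ∫ t in Ioc u v, g t ∂s₂.measure) - (φ (f v) - φ (f u)) := by
    intro u v huv
    rw [← intervalIntegral.integral_of_le huv, ← intervalIntegral.integral_of_le huv,
      ← intervalIntegral.integral_interval_sub_left (hg.intervalIntegrable a v)
        (hg.intervalIntegrable a u),
      ← intervalIntegral.integral_interval_sub_left (hg.intervalIntegrable a v)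
        (hg.intervalIntegrable a u)]
    ring
  suffices H b = H a by linarith [hH a b hab]
  refine eq_of_forall_abs_sub_le_mul_sub (F := fun x => s₁ x + s₂ x) hab fun ε hε => ?_
  obtain ⟨δ, hδ, hgδ⟩ := Metric.uniformContinuousOn_iff.1
    (isCompact_Icc.uniformContinuousOn_of_continuous hg.continuousOn) ε hε
  refine ⟨δ, hδ, fun u hu v hv huv hshort => ?_⟩
  obtain ⟨w, hw, hmvt⟩ : ∃ w ∈ Icc u v, φ (f v) - φ (f u) = g w * (f v - f u) :=
    exists_mem_Icc_comp_sub_eq_mul_sub hφ hfc.continuousOn huv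
  have hclose : ∀ t ∈ Ioc u v, |g t - g w| ≤ ε := fun t ht => by
    have hwt : dist t w < δ := by
      rw [Real.dist_eq, abs_lt]; constructor <;> linarith [ht.1, ht.2, hw.1, hw.2, hshort]
    exact (hgδ t ⟨hu.1.trans ht.1.le, ht.2.trans hv.2⟩ w ⟨hu.1.trans hw.1, hw.2.trans hv.2⟩
      hwt).le
  have hest : ∀ s : StieltjesFunction ℝ,
      |∫ t in Ioc u v, g t ∂s.measure - g w * (s v - s u)| ≤ ε * (s v - s u) := fun s => by
    rw [← s.measureReal_Ioc huv]
    exact abs_setIntegral_sub_mul_measureReal_le measure_Ioc_lt_top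
      (hg.integrableOn_Icc.mono_set Ioc_subset_Icc_self) hclose
  have hdefect : H v - H u = (∫ t in Ioc u v, g t ∂s₁.measure - g w * (s₁ v - s₁ u))
      - (∫ t in Ioc u v, g t ∂s₂.measure - g w * (s₂ v - s₂ u)) := by
    rw [hH u v huv, hmvt, hf u, hf v]
    ring
  calc |H v - H u| ≤ ε * (s₁ v - s₁ u) + ε * (s₂ v - s₂ u) :=
        hdefect ▸ (abs_sub _ _).trans (add_le_add (hest s₁) (hest s₂))
    _ = ε * (s₁ v + s₂ v - (s₁ u + s₂ u)) := by ring

/-- chain rule for BV functions. Let `f : ℝ → ℝ` be continuous and of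
locally bounded variation, i.e. `f = m₁ - m₂` with `m₁, m₂` increasing. Then `d(e^f) = e^f df`
as measures on bounded Borel sets: for any monotone decomposition `e^f = p₁ - p₂` and any
`a ≤ b`, `d(e^f)((a,b]) = ∫_{(a,b]} e^f df`. -/
theorem bv_chain_rule
    (f m₁ m₂ : ℝ → ℝ) (hfc : Continuous f)
    (hm₁ : Monotone m₁) (hm₂ : Monotone m₂)
    (hdecomp : ∀ x, f x = m₁ x - m₂ x)
    (p₁ p₂ : ℝ → ℝ) (hp₁ : Monotone p₁) (hp₂ : Monotone p₂)
    (hpdecomp : ∀ x, Real.exp (f x) = p₁ x - p₂ x) :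
    ∀ a b : ℝ, a ≤ b →
      ((monoStieltjes hp₁) (Ioc a b)).toReal - ((monoStieltjes hp₂) (Ioc a b)).toReal
        = (∫ x in Ioc a b, Real.exp (f x) ∂(monoStieltjes hm₁))
          - ∫ x in Ioc a b, Real.exp (f x) ∂(monoStieltjes hm₂) := by
  intro a b hab
  have hp : ∀ x, hp₁.stieltjesFunction x - hp₂.stieltjesFunction x = Real.exp (f x) := fun x =>
    hp₁.stieltjesFunction_sub_stieltjesFunction hp₂ hpdecomp
      (Real.continuous_exp.comp hfc).continuousWithinAt
  have hm : ∀ x, f x = hm₁.stieltjesFunction x - hm₂.stieltjesFunction x := fun x =>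
    (hm₁.stieltjesFunction_sub_stieltjesFunction hm₂ hdecomp hfc.continuousWithinAt).symm
  rw [monoStieltjes, monoStieltjes, monoStieltjes, monoStieltjes, ← measureReal_def,
    ← measureReal_def, StieltjesFunction.measureReal_Ioc _ hab,
    StieltjesFunction.measureReal_Ioc _ hab,
    StieltjesFunction.setIntegral_deriv_comp_sub_setIntegral hm hfc Real.hasDerivAt_exp
      Real.continuous_exp hab, ← hp, ← hp]
  ring
end
end
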